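/- arXiv:2111.12759 — 2 statements merged into one kernel-verified Lean document; each statement's English description precedes it below -/
import Mathlib

section
/- Let G be a finite graph with m vertices. Then the reduced simplicial cohomology groups H̃^r(I(G); ℚ) of the independence complex of G vanish for all r > m/2 − 1. -/
/-!
Write `I(S)` for the independence complex of the induced graph `G[S]`. If `v ∈ S` has no
neighbour in `S`, then `I(S)` is a cone with apex `v`, hence acyclic. Otherwise `I(S)` is the
union of the deletion `I(S - v)` and the cone `v * I(S ∖ N[v])` over the link, glued along the
link, so `H̃^d(I(S)) = 0` as soon as `H̃^d(I(S - v)) = 0` and `H̃^(d-1)(I(S ∖ N[v])) = 0`.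
As `|S ∖ N[v]| ≤ |S| - 2`, induction on `|S|` gives `H̃^d(I(S)) = 0` whenever `|S| < 2(d + 1)`.
-/

open Finset

/-- An abstract simplicial complex on vertex type `V`, given by its set of faces
(downward closed). -/
structure SCpx (V : Type*) where
  faces : Set (Finset V)
  down : ∀ s t : Finset V, s ⊆ t → t ∈ faces → s ∈ faces

variable {V : Type*} [Fintype V] [DecidableEq V]

/-- The independence complex of a graph: faces are the independent sets. -/
def indepCpx (G : SimpleGraph V) : SCpx V where
  faces := {s | ∀ u ∈ s, ∀ v ∈ s, ¬ G.Adj u v}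
  down := fun s t hst ht u hu v hv => ht u (hst hu) v (hst hv)

/-- An enumeration of the vertices, used to fix orientation signs. -/
noncomputable def ordV (v : V) : ℕ := ((Fintype.equivFin V) v : ℕ)

/-- Reduced simplicial cochains: `cochain K d` is spanned by the faces of
cardinality `d` (so `d = 0` corresponds to the empty face, sitting in
reduced degree `-1`). -/
abbrev cochain (K : SCpx V) (d : ℕ) : Type _ :=
  {s : Finset V // s ∈ K.faces ∧ s.card = d} → ℚ

/-- The simplicial coboundary map on reduced cochains. -/
noncomputable def delta (K : SCpx V) (d : ℕ) : cochain K d →ₗ[ℚ] cochain K (d + 1) where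
  toFun f t := ∑ v ∈ t.1.attach,
    (-1 : ℚ) ^ ((t.1.filter fun w => ordV w < ordV v.1).card) *
      f ⟨t.1.erase v.1, K.down _ _ (Finset.erase_subset _ _) t.2.1, by
        simp [Finset.card_erase_of_mem v.2, t.2.2]⟩
  map_add' f g := by
    funext t
    simp only [Pi.add_apply, mul_add, Finset.sum_add_distrib]
  map_smul' c f := by
    funext t
    simp only [Pi.smul_apply, smul_eq_mul, RingHom.id_apply, Finset.mul_sum]
    exact Finset.sum_congr rfl fun v _ => by ring

/-- The range of the previous coboundary (interpreted as `⊥` in lowest degree). -/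
noncomputable def prevRange (K : SCpx V) : (d : ℕ) → Submodule ℚ (cochain K d)
  | 0 => ⊥
  | (d + 1) => LinearMap.range (delta K d)

/-- Reduced simplicial cohomology over `ℚ` in shifted indexing:
`Hq K d` is `H̃^{d-1}(K; ℚ)`. -/
abbrev Hq (K : SCpx V) (d : ℕ) :=
  ↥(LinearMap.ker (delta K d)) ⧸
    (prevRange K d).comap (LinearMap.ker (delta K d)).subtype

/-- `reducedBetti K r = dim_ℚ H̃^r(K; ℚ)`. -/
noncomputable def reducedBetti (K : SCpx V) (r : ℤ) : ℕ :=
  if r < -1 then 0 else Module.finrank ℚ (Hq K (r + 1).toNat)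

section

variable {V : Type*}

lemma SCpx.ext_faces {K L : SCpx V} (h : K.faces = L.faces) : K = L := by
  cases K; cases L; cases h; rfl

def SCpx.deletion (K : SCpx V) (v : V) : SCpx V where
  faces := {s | s ∈ K.faces ∧ v ∉ s}
  down s t hst ht := ⟨K.down s t hst ht.1, fun hv => ht.2 (hst hv)⟩

lemma SCpx.deletion_faces_subset (K : SCpx V) (v : V) : (K.deletion v).faces ⊆ K.faces :=
  fun _ hs => hs.1

def indepCpxOn (G : SimpleGraph V) (S : Finset V) : SCpx V where
  faces := {s | s ⊆ S ∧ ∀ u ∈ s, ∀ w ∈ s, ¬ G.Adj u w}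
  down _ _ hst ht := ⟨hst.trans ht.1, fun u hu w hw => ht.2 u (hst hu) w (hst hw)⟩

variable {K L : SCpx V} {d : ℕ}

open Classical in
noncomputable def evalFace (f : cochain K d) (s : Finset V) : ℚ :=
  if h : s ∈ K.faces ∧ s.card = d then f ⟨s, h⟩ else 0

lemma evalFace_of_mem (f : cochain K d) {s : Finset V} (hs : s ∈ K.faces) (hcard : s.card = d) :
    evalFace f s = f ⟨s, hs, hcard⟩ :=
  dif_pos ⟨hs, hcard⟩

@[simp]
lemma evalFace_val (f : cochain K d) (t : {s : Finset V // s ∈ K.faces ∧ s.card = d}) :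
    evalFace f t.1 = f t :=
  evalFace_of_mem f t.2.1 t.2.2

@[simp]
lemma evalFace_zero (s : Finset V) : evalFace (0 : cochain K d) s = 0 := by
  unfold evalFace
  split_ifs <;> rfl

/-- Restriction to a subcomplex and extension by zero from one are both this map. -/
noncomputable def transferCochain (L : SCpx V) (f : cochain K d) : cochain L d :=
  fun t => evalFace f t.1

lemma evalFace_transferCochain (f : cochain K d) {s : Finset V} (hs : s ∈ L.faces) :
    evalFace (transferCochain L f) s = evalFace f s := by
  by_cases hcard : s.card = d
  · rw [evalFace_of_mem _ hs hcard]; rfl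
  · simp only [evalFace, hcard, and_false, dite_false]

lemma transferCochain_transferCochain (hLK : L.faces ⊆ K.faces) (g : cochain L d) :
    transferCochain L (transferCochain K g) = g :=
  funext fun t => (evalFace_transferCochain g (hLK t.2.1)).trans (evalFace_val g t)

@[simp]
lemma transferCochain_zero : transferCochain L (0 : cochain K d) = 0 :=
  funext fun _ => evalFace_zero _

end

section

variable {V : Type*} [DecidableEq V] {K : SCpx V} {d : ℕ}

def SCpx.link (K : SCpx V) (v : V) : SCpx V where
  faces := {s | v ∉ s ∧ insert v s ∈ K.faces}
  down _ _ hst ht := ⟨fun hv => ht.1 (hst hv), K.down _ _ (insert_subset_insert v hst) ht.2⟩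

lemma SCpx.link_faces_subset (K : SCpx V) (v : V) : (K.link v).faces ⊆ K.faces :=
  fun s hs => K.down _ _ (subset_insert v s) hs.2

lemma evalFace_erase (f : cochain K d) (t : {s : Finset V // s ∈ K.faces ∧ s.card = d + 1})
    {u : V} (hu : u ∈ t.1) :
    evalFace f (t.1.erase u) =
      f ⟨t.1.erase u, K.down _ _ (erase_subset u t.1) t.2.1,
        by simp [card_erase_of_mem hu, t.2.2]⟩ :=
  evalFace_of_mem f (K.down _ _ (erase_subset u t.1) t.2.1)
    (by simp [card_erase_of_mem hu, t.2.2])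

lemma insert_mem_indepCpxOn_iff (G : SimpleGraph V) {S s : Finset V} {v : V} :
    insert v s ∈ (indepCpxOn G S).faces ↔
      v ∈ S ∧ (∀ w ∈ s, ¬ G.Adj v w) ∧ s ∈ (indepCpxOn G S).faces := by
  simp only [indepCpxOn, Set.mem_ofPred_eq, insert_subset_iff, forall_mem_insert]
  constructor
  · rintro ⟨⟨hvS, hsS⟩, ⟨-, hvs⟩, hs⟩
    exact ⟨hvS, hvs, hsS, fun u hu => (hs u hu).2⟩
  · rintro ⟨hvS, hvs, hsS, hs⟩
    exact ⟨⟨hvS, hsS⟩, ⟨G.irrefl, hvs⟩, fun u hu => ⟨fun h => hvs u hu h.symm, hs u hu⟩⟩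

lemma deletion_indepCpxOn (G : SimpleGraph V) (S : Finset V) (v : V) :
    (indepCpxOn G S).deletion v = indepCpxOn G (S.erase v) :=
  SCpx.ext_faces <| Set.ext fun s => by
    simp only [SCpx.deletion, indepCpxOn, Set.mem_ofPred_eq, subset_erase]
    tauto

end

section

variable {V : Type*} [Fintype V]

noncomputable def faceSign (u : V) (s : Finset V) : ℚ :=
  (-1 : ℚ) ^ (s.filter fun w => ordV w < ordV u).card

lemma faceSign_mul_self (u : V) (s : Finset V) : faceSign u s * faceSign u s = 1 := by
  rw [faceSign, ← pow_add, ← two_mul, pow_mul]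
  norm_num

lemma indepCpx_eq_indepCpxOn_univ (G : SimpleGraph V) : indepCpx G = indepCpxOn G univ :=
  SCpx.ext_faces <| Set.ext fun _ => by simp [indepCpx, indepCpxOn]

end

lemma faceSign_eq_of_mem {u : V} (w : V) {t : Finset V} (hu : u ∈ t) :
    faceSign w t = (if ordV u < ordV w then -1 else 1) * faceSign w (t.erase u) := by
  rw [faceSign, faceSign, filter_erase]
  split_ifs with h
  · rw [← card_erase_add_one (mem_filter.mpr ⟨hu, h⟩), pow_succ]
    ring
  · rw [erase_eq_of_notMem (a := u) fun hc => h (mem_filter.mp hc).2, one_mul]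

lemma faceSign_mul_faceSign_erase {u v : V} {t : Finset V} (hu : u ∈ t) (hv : v ∈ t)
    (huv : u ≠ v) :
    faceSign u t * faceSign v (t.erase u) = -(faceSign v t * faceSign u (t.erase v)) := by
  rw [faceSign_eq_of_mem u hv, faceSign_eq_of_mem v hu]
  have hord : ordV u ≠ ordV v := fun h => huv ((Fintype.equivFin V).injective (Fin.ext h))
  rcases lt_or_gt_of_ne hord with h | h
  · rw [if_neg h.not_gt, if_pos h]; ring
  · rw [if_pos h, if_neg h.not_gt]; ring

lemma faceSign_erase_mul_faceSign_erase {u v : V} {t : Finset V} (hu : u ∈ t) (hv : v ∈ t)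
    (huv : u ≠ v) :
    faceSign u (t.erase v) * faceSign v (t.erase u) = -(faceSign u t * faceSign v t) := by
  linear_combination
    faceSign u t * faceSign u (t.erase v) * faceSign_mul_faceSign_erase hu hv huv -
    faceSign u (t.erase v) * faceSign v (t.erase u) * faceSign_mul_self u t -
    faceSign u t * faceSign v t * faceSign_mul_self u (t.erase v)

section Coboundary

variable {K L : SCpx V} {d : ℕ}

lemma delta_apply (f : cochain K d) (t : {s : Finset V // s ∈ K.faces ∧ s.card = d + 1}) :
    delta K d f t = ∑ u ∈ t.1, faceSign u t.1 * evalFace f (t.1.erase u) := by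
  rw [← sum_attach t.1]
  exact sum_congr rfl fun u _ => by rw [evalFace_erase f t u.2]; rfl

lemma delta_delta (f : cochain K d) : delta K (d + 1) (delta K d f) = 0 := by
  funext T
  set F : V → V → ℚ := fun u w =>
    faceSign u T.1 * (faceSign w (T.1.erase u) * evalFace f ((T.1.erase u).erase w))
  have hexpand : delta K (d + 1) (delta K d f) T = ∑ u ∈ T.1, ∑ w ∈ T.1.erase u, F u w := by
    rw [delta_apply]
    refine sum_congr rfl fun u hu => ?_
    rw [evalFace_erase _ T hu, delta_apply, mul_sum]
  have hanti : ∀ u ∈ T.1, ∀ w ∈ T.1.erase u, F u w = -F w u := fun u hu w hw => by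
    obtain ⟨hwu, hwT⟩ := mem_erase.mp hw
    simp only [F, erase_right_comm (a := u) (b := w)]
    linear_combination evalFace f ((T.1.erase w).erase u) *
      faceSign_mul_faceSign_erase hu hwT hwu.symm
  have hcomm : ∑ u ∈ T.1, ∑ w ∈ T.1.erase u, F u w = ∑ w ∈ T.1, ∑ u ∈ T.1.erase w, F u w :=
    sum_comm' fun u w => by simp only [mem_erase]; tauto
  have hself : ∑ u ∈ T.1, ∑ w ∈ T.1.erase u, F u w = -∑ u ∈ T.1, ∑ w ∈ T.1.erase u, F u w := by
    conv_lhs => rw [hcomm]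
    simp only [← sum_neg_distrib]
    exact sum_congr rfl fun w hw => sum_congr rfl fun u hu => by rw [hanti w hw u hu, neg_neg]
  rw [hexpand, Pi.zero_apply]
  linarith

lemma delta_transferCochain (hLK : L.faces ⊆ K.faces) (f : cochain K d) :
    delta L d (transferCochain L f) = transferCochain L (delta K d f) := by
  funext t
  change _ = evalFace (delta K d f) t.1
  rw [delta_apply, evalFace_of_mem _ (hLK t.2.1) t.2.2, delta_apply]
  exact sum_congr rfl fun u _ => by
    rw [evalFace_transferCochain _ (L.down _ _ (erase_subset u t.1) t.2.1)]

/-- The contracting homotopy of a cone with apex `v`. -/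
noncomputable def contract (v : V) (f : cochain K (d + 1)) : cochain K d :=
  fun s => if v ∈ s.1 then 0 else faceSign v (insert v s.1) * evalFace f (insert v s.1)

noncomputable def wedge (v : V) (K : SCpx V) (b : cochain L d) : cochain K (d + 1) :=
  fun s => if v ∈ s.1 then faceSign v s.1 * evalFace b (s.1.erase v) else 0

variable (v : V)

lemma delta_contract_of_mem (f : cochain K (d + 1))
    (t : {s : Finset V // s ∈ K.faces ∧ s.card = d + 1}) (hvt : v ∈ t.1) :
    delta K d (contract v f) t = f t := by
  rw [delta_apply, sum_eq_single_of_mem v hvt]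
  · rw [evalFace_erase _ t hvt]
    simp only [contract, notMem_erase, if_false, insert_erase hvt, evalFace_val]
    rw [← mul_assoc, faceSign_mul_self, one_mul]
  · intro u hu huv
    rw [evalFace_erase _ t hu]
    simp only [contract, mem_erase.mpr ⟨Ne.symm huv, hvt⟩, if_true, mul_zero]

lemma delta_contract_add_contract_delta (f : cochain K (d + 1))
    (t : {s : Finset V // s ∈ K.faces ∧ s.card = d + 1}) (hvt : v ∉ t.1)
    (hins : insert v t.1 ∈ K.faces) :
    delta K d (contract v f) t + contract v (delta K (d + 1) f) t = f t := by
  set T := insert v t.1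
  have hT : T.card = d + 1 + 1 := by rw [card_insert_of_notMem hvt, t.2.2]
  have hterm : ∀ u ∈ t.1, faceSign u t.1 * evalFace (contract v f) (t.1.erase u) =
      -(faceSign v T * (faceSign u T * evalFace f (T.erase u))) := fun u hu => by
    have huv : u ≠ v := fun h => hvt (h ▸ hu)
    have hTu : T.erase u = insert v (t.1.erase u) := erase_insert_of_ne huv.symm
    have hswap := faceSign_erase_mul_faceSign_erase (mem_insert_of_mem hu)
      (mem_insert_self v t.1) huv
    rw [erase_insert hvt] at hswap
    rw [evalFace_erase _ t hu]
    simp only [contract, mem_erase, hvt, and_false, if_false, ← hTu]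
    linear_combination evalFace f (T.erase u) * hswap
  have hcontract : contract v (delta K (d + 1) f) t = faceSign v T *
      (faceSign v T * f t + ∑ u ∈ t.1, faceSign u T * evalFace f (T.erase u)) := by
    simp only [contract, hvt, if_false]
    rw [evalFace_of_mem _ hins hT, delta_apply]
    simp only [T, sum_insert hvt, erase_insert hvt, evalFace_val]
  rw [delta_apply, sum_congr rfl hterm, sum_neg_distrib, ← mul_sum, hcontract]
  linear_combination f t * faceSign_mul_self v T

lemma delta_wedge_of_notMem (b : cochain L d)
    (t : {s : Finset V // s ∈ K.faces ∧ s.card = d + 1 + 1}) (hvt : v ∉ t.1) :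
    delta K (d + 1) (wedge v K b) t = 0 := by
  rw [delta_apply]
  refine sum_eq_zero fun u hu => ?_
  rw [evalFace_erase _ t hu]
  simp only [wedge, mem_erase, hvt, and_false, if_false, mul_zero]

lemma delta_wedge_of_mem (b : cochain L d)
    (t : {s : Finset V // s ∈ K.faces ∧ s.card = d + 1 + 1}) (hvt : v ∈ t.1)
    (hL : t.1.erase v ∈ L.faces) :
    delta K (d + 1) (wedge v K b) t =
      -(faceSign v t.1 * evalFace (delta L d b) (t.1.erase v)) := by
  have hcard : (t.1.erase v).card = d + 1 := by simp [card_erase_of_mem hvt, t.2.2]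
  have hv : faceSign v t.1 * evalFace (wedge v K b) (t.1.erase v) = 0 := by
    rw [evalFace_erase _ t hvt]
    simp only [wedge, notMem_erase, if_false, mul_zero]
  rw [delta_apply, ← add_sum_erase _ _ hvt, hv, zero_add, evalFace_of_mem _ hL hcard,
    delta_apply, mul_sum, ← sum_neg_distrib]
  refine sum_congr rfl fun u hu => ?_
  obtain ⟨huv, hut⟩ := mem_erase.mp hu
  rw [evalFace_erase _ t hut]
  simp only [wedge, mem_erase, Ne.symm huv, hvt, ne_eq, not_false_eq_true, and_self, if_true,
    erase_right_comm (a := u) (b := v)]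
  linear_combination
    evalFace b ((t.1.erase v).erase u) * faceSign_mul_faceSign_erase hut hvt huv

end Coboundary

namespace SCpx

variable {K : SCpx V}

/-- `K.AcyclicAt d` says `H̃^d(K; ℚ) = 0`: `cochain K (d + 1)` sits in reduced degree `d`. -/
def AcyclicAt (K : SCpx V) (d : ℕ) : Prop :=
  ∀ f : cochain K (d + 1), delta K (d + 1) f = 0 → f ∈ LinearMap.range (delta K d)

lemma finrank_Hq_eq_zero {d : ℕ} (h : K.AcyclicAt d) : Module.finrank ℚ (Hq K (d + 1)) = 0 := by
  have : Subsingleton (Hq K (d + 1)) := by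
    rw [Submodule.Quotient.subsingleton_iff, Submodule.eq_top_iff']
    exact fun x => h x.1 x.2
  exact Module.finrank_zero_of_subsingleton

lemma acyclicAt_of_cone (v : V) (hcone : ∀ s ∈ K.faces, insert v s ∈ K.faces) (d : ℕ) :
    K.AcyclicAt d := by
  intro f hf
  refine ⟨contract v f, funext fun t => ?_⟩
  by_cases hvt : v ∈ t.1
  · exact delta_contract_of_mem v f t hvt
  · have h := delta_contract_add_contract_delta v f t hvt (hcone _ t.2.1)
    simpa [hf, contract] using h

/-- The restriction of `contract v f` to the link is a cocycle there, and a primitive `b` of it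
gives `f = delta (-wedge v K b)`. -/
lemma mem_range_delta_of_eq_zero_off_star {v : V} {d : ℕ} (hlink : (K.link v).AcyclicAt d)
    {f : cochain K (d + 1 + 1)} (hf : delta K (d + 1 + 1) f = 0)
    (hoff : ∀ t, v ∉ t.1 → f t = 0) :
    f ∈ LinearMap.range (delta K (d + 1)) := by
  set a : cochain (K.link v) (d + 1) := transferCochain _ (contract v f)
  have ha : delta _ (d + 1) a = 0 := by
    rw [delta_transferCochain (K.link_faces_subset v)]
    funext t
    change evalFace (delta K (d + 1) (contract v f)) t.1 = 0
    have h := delta_contract_add_contract_delta v f ⟨t.1, K.link_faces_subset v t.2.1, t.2.2⟩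
      t.2.1.1 t.2.1.2
    have h0 : f ⟨t.1, K.link_faces_subset v t.2.1, t.2.2⟩ = 0 := hoff _ t.2.1.1
    rw [evalFace_of_mem _ (K.link_faces_subset v t.2.1) t.2.2]
    simpa [hf, contract, h0] using h
  obtain ⟨b, hb⟩ := hlink a ha
  refine ⟨-wedge v K b, funext fun t => ?_⟩
  rw [map_neg, Pi.neg_apply]
  by_cases hvt : v ∈ t.1
  · have hlk : t.1.erase v ∈ (K.link v).faces :=
      ⟨notMem_erase v t.1, by rw [insert_erase hvt]; exact t.2.1⟩
    rw [delta_wedge_of_mem v b t hvt hlk, hb, neg_neg, evalFace_transferCochain _ hlk,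
      evalFace_erase _ t hvt]
    simp only [contract, notMem_erase, if_false, insert_erase hvt, evalFace_val]
    rw [← mul_assoc, faceSign_mul_self, one_mul]
  · rw [delta_wedge_of_notMem v b t hvt, hoff t hvt, neg_zero]

/-- The cohomological form of `K = deletion K v ∪ (v * link K v)`, glued along `link K v`. -/
lemma acyclicAt_succ_of_deletion_link {v : V} {d : ℕ}
    (hdel : (K.deletion v).AcyclicAt (d + 1)) (hlink : (K.link v).AcyclicAt d) :
    K.AcyclicAt (d + 1) := by
  intro f hf
  obtain ⟨g, hg⟩ := hdel (transferCochain _ f) <| by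
    rw [delta_transferCochain (K.deletion_faces_subset v), hf, transferCochain_zero]
  set g' : cochain K (d + 1) := transferCochain K g
  have hdg' : transferCochain (K.deletion v) (delta K (d + 1) g') = transferCochain _ f := by
    rw [← delta_transferCochain (K.deletion_faces_subset v),
      transferCochain_transferCochain (K.deletion_faces_subset v), hg]
  have hoff : ∀ t, v ∉ t.1 → (f - delta K (d + 1) g') t = 0 := fun t hvt => by
    have h := congrFun hdg' ⟨t.1, ⟨t.2.1, hvt⟩, t.2.2⟩
    simp only [transferCochain, evalFace_val] at h
    rw [Pi.sub_apply, h, sub_self]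
  obtain ⟨c, hc⟩ := mem_range_delta_of_eq_zero_off_star hlink
    (by rw [map_sub, hf, delta_delta, sub_zero]) hoff
  exact ⟨g' + c, by rw [map_add, hc, add_sub_cancel]⟩

end SCpx

open SCpx

section IndependenceComplex

variable (G : SimpleGraph V) [DecidableRel G.Adj]

lemma link_indepCpxOn {S : Finset V} {v : V} (hv : v ∈ S) :
    (indepCpxOn G S).link v = indepCpxOn G (S \ insert v (G.neighborFinset v)) :=
  ext_faces <| Set.ext fun s => by
    simp only [link, Set.mem_ofPred_eq, insert_mem_indepCpxOn_iff]
    simp only [indepCpxOn, Set.mem_ofPred_eq, subset_iff, mem_sdiff, mem_insert,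
      SimpleGraph.mem_neighborFinset, not_or]
    constructor
    · rintro ⟨hvs, -, hvadj, hsS, hs⟩
      exact ⟨fun x hx => ⟨hsS hx, fun h => hvs (h ▸ hx), hvadj x hx⟩, hs⟩
    · rintro ⟨hsub, hs⟩
      exact ⟨fun h => (hsub h).2.1 rfl, hv, fun w hw => (hsub hw).2.2,
        fun x hx => (hsub hx).1, hs⟩

lemma card_sdiff_insert_neighborFinset_add_two_le {S : Finset V} {v w : V}
    (hv : v ∈ S) (hw : w ∈ S) (hvw : G.Adj v w) :
    (S \ insert v (G.neighborFinset v)).card + 2 ≤ S.card := by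
  have hsub : S \ insert v (G.neighborFinset v) ⊆ (S.erase v).erase w := fun x hx => by
    simp only [mem_sdiff, mem_insert, SimpleGraph.mem_neighborFinset, not_or] at hx
    exact mem_erase.mpr ⟨fun h => hx.2.2 (h ▸ hvw), mem_erase.mpr ⟨hx.2.1, hx.1⟩⟩
  have := card_le_card hsub
  have := card_erase_add_one (mem_erase.mpr ⟨(G.ne_of_adj hvw).symm, hw⟩)
  have := card_erase_add_one hv
  omega

theorem acyclicAt_indepCpxOn (S : Finset V) (d : ℕ) (hS : S.card < 2 * (d + 1)) :
    (indepCpxOn G S).AcyclicAt d := by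
  induction S using Finset.strongInduction generalizing d with
  | H S ih =>
    rcases S.eq_empty_or_nonempty with rfl | ⟨v, hv⟩
    · intro f _
      refine ⟨0, funext fun t => absurd t.2.2 ?_⟩
      rw [subset_empty.mp t.2.1.1, card_empty]
      omega
    by_cases hadj : ∃ w ∈ S, G.Adj v w
    · obtain ⟨w, hw, hvw⟩ := hadj
      have hcard_link := card_sdiff_insert_neighborFinset_add_two_le G hv hw hvw
      have hcard_del := card_erase_add_one hv
      obtain ⟨d, rfl⟩ : ∃ d', d = d' + 1 := ⟨d - 1, by omega⟩
      apply acyclicAt_succ_of_deletion_link (v := v)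
      · rw [deletion_indepCpxOn G]
        exact ih _ (erase_ssubset hv) _ (by omega)
      · rw [link_indepCpxOn G hv]
        exact ih _ ((ssubset_iff_of_subset sdiff_subset).mpr ⟨v, hv, by simp⟩) _ (by omega)
    · push Not at hadj
      exact acyclicAt_of_cone v (fun s hs => (insert_mem_indepCpxOn_iff G).mpr
        ⟨hv, fun w hw => hadj w (hs.1 hw), hs⟩) d

end IndependenceComplex

/-- For a graph `G` with `m` vertices, `H̃^r(I(G); ℚ) = 0`
whenever `r > m/2 - 1`, i.e. whenever `m < 2r + 2`. -/
theorem stmt2 (G : SimpleGraph V) (r : ℤ) (hr : (Fintype.card V : ℤ) < 2 * r + 2) :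
    reducedBetti (indepCpx G) r = 0 := by
  classical
  obtain ⟨d, rfl⟩ : ∃ d : ℕ, r = d := ⟨r.toNat, by omega⟩
  have hd : ((d : ℤ) + 1).toNat = d + 1 := by omega
  rw [reducedBetti, if_neg (by omega), hd, indepCpx_eq_indepCpxOn_univ]
  exact finrank_Hq_eq_zero (acyclicAt_indepCpxOn G univ d (by rw [card_univ]; omega))
end

section
/- Let V be an (n+m)-dimensional vector space over ℚ with basis e_1,…,e_{n+m}, let B̃ be a full-rank (n+m)×n rational matrix, set α_i = Σ_r B̃_{ri} e_r for i ∈ [n]. Let I ⊆ [n] with B̃_{I,I} = 0, and let N(I) ⊆ [n+m]\I be a |I|-element set with B̃_{N(I),I} invertible. Let G^I be the submodule of the exterior algebra Λ(V) generated by ⋀_{i∈I} α_i over the subalgebra generated by {e_j : j ∉ I}. Then the set {(⋀_{a∈A} e_a) ∧ (⋀_{i∈I} α_i) : A ⊆ [n+m] \ (I ∪ N(I))} is a basis of G^I; in particular dim G^I = 2^{n+m−2|I|}. -/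
/-!
Replace the standard basis vectors `e_j`, `j ∈ N(I)`, by the `α_i`, `i ∈ I`, matching both
sets in increasing order. The resulting family `b` is a basis of `V`: its coordinate matrix is
block triangular with diagonal blocks `B̃_{N(I),I}ᵀ` and `1`. In the basis of `Λ(V)` built
from `b`, `ω` is the basis element `b_{N(I)}` and `θ(A,I) = b_A ∧ b_{N(I)} = ±b_{A ∪ N(I)}`,
so the `θ(A,I)` are linearly independent. Since `B̃_{I,I} = 0`, each `e_j` with `j ∉ I` lies
in the span of the `b_u` with `u ∉ I`, and `b_u ∧ b_A ∧ b_{N(I)}` is `0` or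
`±b_{A ∪ {u}} ∧ b_{N(I)}`. So the span of the `θ(A,I)` is stable under left multiplication by
the subalgebra generated by the `e_j`, `j ∉ I`, and therefore equals `G^I`.
-/

theorem Submodule.mul_mem_of_mem_adjoin {R A : Type*} [CommSemiring R] [Semiring A]
    [Algebra R A] {X : Set A} {W : Submodule R A} (hX : ∀ x ∈ X, ∀ w ∈ W, x * w ∈ W) {y : A}
    (hy : y ∈ Algebra.adjoin R X) {w : A} (hw : w ∈ W) : y * w ∈ W := by
  induction hy using Algebra.adjoin_induction generalizing w with
  | mem x hx => exact hX x hx w hw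
  | algebraMap r => rw [← Algebra.smul_def]; exact W.smul_mem r hw
  | add x y _ _ hx hy => rw [add_mul]; exact add_mem (hx hw) (hy hw)
  | mul x y _ _ hx hy => rw [mul_assoc]; exact hx (hy hw)

theorem Module.Basis.repr_apply_eq_apply {ι R : Type*} [Fintype ι] [DecidableEq ι]
    [CommRing R] (b : Module.Basis ι R (ι → R)) {u : ι}
    (hu : ∀ j, b j u = (Pi.single j 1 : ι → R) u) (x : ι → R) : b.repr x u = x u := by
  have hcoord : b.coord u = LinearMap.proj u :=
    b.ext fun j => by simp [hu j, Finsupp.single_apply, Pi.single_apply, eq_comm]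
  exact LinearMap.congr_fun hcoord x

theorem linearIndependent_of_eq_single_of_det_ne_zero {ι K : Type*} [Fintype ι] [DecidableEq ι]
    [Field K] {v : ι → ι → K} (N : Finset ι) (hv : ∀ j ∉ N, v j = Pi.single j 1)
    (hdet : (Matrix.of fun r c : N => v r c).det ≠ 0) : LinearIndependent K v := by
  refine (Matrix.linearIndependent_rows_iff_isUnit (A := Matrix.of v)).2 ?_
  have hlower : ∀ i, i ∉ N → ∀ j, j ∈ N → Matrix.of v i j = 0 := fun i hi j hj => by
    simp [hv i hi, ne_of_mem_of_not_mem hj hi]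
  have hone : (Matrix.of v).toSquareBlockProp (· ∉ N) = 1 := by
    ext i j
    simp [Matrix.toSquareBlockProp, Matrix.toBlock, hv i i.2, Pi.single_apply, Matrix.one_apply,
      Subtype.ext_iff, eq_comm]
  rw [Matrix.isUnit_iff_isUnit_det, Matrix.twoBlockTriangular_det _ (· ∈ N) hlower, hone,
    Matrix.det_one, mul_one, isUnit_iff_ne_zero]
  convert hdet using 2
  exact Matrix.ext fun _ _ => rfl

namespace ExteriorAlgebra

variable {R M I : Type*} [CommRing R] [AddCommGroup M] [Module R M] [LinearOrder I]

theorem list_prod_map_sort_eq_ιMulti (f : I → M) (s : Finset I) {k : ℕ} (h : s.card = k) :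
    ((s.sort (· ≤ ·)).map fun i => ι R (f i)).prod =
      ιMulti R k (f ∘ s.orderEmbOfFin h) := by
  subst h
  rw [ιMulti_apply]
  congr 1
  apply List.ext_getElem <;> simp [Finset.orderEmbOfFin_apply]

variable (b : Module.Basis I R M)

theorem basis_eq_prod_sort (s : Finset I) :
    b.ExteriorAlgebra s = ((s.sort (· ≤ ·)).map fun i => ι R (b i)).prod := by
  rw [list_prod_map_sort_eq_ιMulti _ _ rfl, basis_apply_ofCard b rfl]
  rfl

theorem basis_singleton (u : I) : b.ExteriorAlgebra {u} = ι R (b u) := by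
  simp [basis_eq_prod_sort]

theorem basis_empty : b.ExteriorAlgebra ∅ = 1 := by
  simp [basis_eq_prod_sort]

theorem basis_mul_basis_of_not_disjoint {s t : Finset I} (h : ¬Disjoint s t) :
    b.ExteriorAlgebra s * b.ExteriorAlgebra t = 0 :=
  basis_mul_of_not_disjoint b (Set.powersetCard.ofCard rfl) (Set.powersetCard.ofCard rfl) h

theorem exists_basis_mul_basis_of_disjoint {s t : Finset I} (h : Disjoint s t) :
    ∃ ε : ℤˣ, b.ExteriorAlgebra s * b.ExteriorAlgebra t = ε • b.ExteriorAlgebra (s ∪ t) :=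
  ⟨_, (basis_mul_of_disjoint b (Set.powersetCard.ofCard rfl) (Set.powersetCard.ofCard rfl)
    h).trans (congrArg _ (by simp [Set.powersetCard.disjUnion, Finset.disjUnion_eq_union]))⟩

theorem linearIndependent_basis_mul_basis (N : Finset I) :
    LinearIndependent R fun A : {A : Finset I // Disjoint A N} =>
      b.ExteriorAlgebra A * b.ExteriorAlgebra N := by
  choose ε hε using fun A : {A : Finset I // Disjoint A N} =>
    exists_basis_mul_basis_of_disjoint b A.2
  have hinj : Function.Injective fun A : {A : Finset I // Disjoint A N} => A.1 ∪ N :=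
    fun A A' h => Subtype.ext <| by
      simpa [Finset.union_sdiff_cancel_right A.2, Finset.union_sdiff_cancel_right A'.2]
        using congrArg (· \ N) h
  convert (b.ExteriorAlgebra.linearIndependent.comp _ hinj).units_smul
    fun A => Units.map (Int.castRingHom R) (ε A) using 1
  funext A
  change _ = ((ε A : ℤ) : R) • b.ExteriorAlgebra (A.1 ∪ N)
  rw [hε, Units.smul_def, Int.cast_smul_eq_zsmul]

section Span

variable [Fintype I]

noncomputable def spanBasisMulBasis (K N : Finset I) : Submodule R (ExteriorAlgebra R M) :=
  Submodule.span R (Set.range fun A : {A : Finset I // A ⊆ (K ∪ N)ᶜ} =>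
    b.ExteriorAlgebra A * b.ExteriorAlgebra N)

theorem linearIndependent_basis_mul_basis_of_subset_compl (K N : Finset I) :
    LinearIndependent R fun A : {A : Finset I // A ⊆ (K ∪ N)ᶜ} =>
      b.ExteriorAlgebra A * b.ExteriorAlgebra N := by
  have hinj : Function.Injective fun A : {A : Finset I // A ⊆ (K ∪ N)ᶜ} =>
      (⟨A.1, (Finset.subset_compl_iff_disjoint_right.1 A.2).mono_right
        Finset.subset_union_right⟩ : {A : Finset I // Disjoint A N}) :=
    fun A A' h => Subtype.ext (congrArg Subtype.val h :)
  have hli := (linearIndependent_basis_mul_basis b N).comp _ hinj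
  exact hli

theorem finrank_spanBasisMulBasis [Nontrivial R] (K N : Finset I) :
    Module.finrank R (spanBasisMulBasis b K N) = 2 ^ (K ∪ N)ᶜ.card := by
  rw [spanBasisMulBasis,
    finrank_span_eq_card (linearIndependent_basis_mul_basis_of_subset_compl b K N),
    Fintype.card_of_subtype _ fun _ => Finset.mem_powerset, Finset.card_powerset]

variable {b} {K N : Finset I}

theorem basis_mem_spanBasisMulBasis : b.ExteriorAlgebra N ∈ spanBasisMulBasis b K N := by
  have h := Submodule.subset_span (R := R) (Set.mem_range_self (f := fun A :
    {A : Finset I // A ⊆ (K ∪ N)ᶜ} => b.ExteriorAlgebra A * b.ExteriorAlgebra N)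
    ⟨∅, Finset.empty_subset _⟩)
  rwa [basis_empty, one_mul] at h

theorem ι_basis_mul_mem_spanBasisMulBasis {u : I} (hu : u ∉ K) {x : ExteriorAlgebra R M}
    (hx : x ∈ spanBasisMulBasis b K N) : ι R (b u) * x ∈ spanBasisMulBasis b K N := by
  induction hx using Submodule.span_induction with
  | mem _ h =>
    obtain ⟨⟨A, hA⟩, rfl⟩ := h
    rw [← basis_singleton, ← mul_assoc]
    by_cases huA : u ∈ A
    · rw [basis_mul_basis_of_not_disjoint b
        (Finset.not_disjoint_iff.2 ⟨u, Finset.mem_singleton_self u, huA⟩), zero_mul]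
      exact zero_mem _
    obtain ⟨ε, hε⟩ := exists_basis_mul_basis_of_disjoint b (Finset.disjoint_singleton_left.2 huA)
    rw [hε, smul_mul_assoc, ← Finset.insert_eq]
    by_cases huN : u ∈ N
    · rw [basis_mul_basis_of_not_disjoint b
        (Finset.not_disjoint_iff.2 ⟨u, Finset.mem_insert_self u A, huN⟩), smul_zero]
      exact zero_mem _
    refine Submodule.smul_of_tower_mem _ ε (Submodule.subset_span ⟨⟨insert u A, ?_⟩, rfl⟩)
    exact Finset.insert_subset (by simp [hu, huN]) hA
  | zero => simp
  | add x y _ _ hx hy => rw [mul_add]; exact add_mem hx hy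
  | smul r x _ hx => rw [mul_smul_comm]; exact Submodule.smul_mem _ r hx

theorem ι_mul_mem_spanBasisMulBasis {v : M} (hv : v ∈ Submodule.span R (b '' {u | u ∉ K}))
    {x : ExteriorAlgebra R M} (hx : x ∈ spanBasisMulBasis b K N) :
    ι R v * x ∈ spanBasisMulBasis b K N := by
  induction hv using Submodule.span_induction with
  | mem _ h =>
    obtain ⟨u, hu, rfl⟩ := h
    exact ι_basis_mul_mem_spanBasisMulBasis hu hx
  | zero => simp
  | add v w _ _ hv hw => rw [map_add, add_mul]; exact add_mem hv hw
  | smul r v _ hv => rw [map_smul, smul_mul_assoc]; exact Submodule.smul_mem _ r hv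

theorem mul_basis_mem_spanBasisMulBasis_of_mem_adjoin {X : Set (ExteriorAlgebra R M)}
    (hX : ∀ x ∈ X, ∃ v ∈ Submodule.span R (b '' {u | u ∉ K}), ι R v = x)
    {y : ExteriorAlgebra R M} (hy : y ∈ Algebra.adjoin R X) :
    y * b.ExteriorAlgebra N ∈ spanBasisMulBasis b K N := by
  refine Submodule.mul_mem_of_mem_adjoin (fun x hx w hw => ?_) hy basis_mem_spanBasisMulBasis
  obtain ⟨v, hv, rfl⟩ := hX x hx
  exact ι_mul_mem_spanBasisMulBasis hv hw

end Span

end ExteriorAlgebra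

section Exchange

variable {K : Type*} [Field K] {n m : ℕ} (B : Matrix (Fin (n + m)) (Fin n) K)
  (I : Finset (Fin n)) (N : Finset (Fin (n + m))) (hcard : N.card = I.card)

def exchangeFamily (j : Fin (n + m)) : Fin (n + m) → K :=
  if h : j ∈ N then fun r => B r (I.orderIsoOfFin rfl ((N.orderIsoOfFin hcard).symm ⟨j, h⟩))
  else Pi.single j 1

theorem exchangeFamily_of_notMem {j : Fin (n + m)} (hj : j ∉ N) :
    exchangeFamily B I N hcard j = Pi.single j 1 :=
  dif_neg hj

theorem exchangeFamily_orderIsoOfFin (k : Fin I.card) :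
    exchangeFamily B I N hcard (N.orderIsoOfFin hcard k) =
      fun r => B r (I.orderIsoOfFin rfl k) := by
  rw [exchangeFamily, dif_pos (N.orderIsoOfFin hcard k).2, Subtype.coe_eta,
    OrderIso.symm_apply_apply]

variable {B I N hcard} in
theorem linearIndependent_exchangeFamily (hinv : (Matrix.det fun r c : Fin I.card =>
    B ((N.orderIsoOfFin hcard r : Fin (n + m))) ((I.orderIsoOfFin rfl c : Fin n))) ≠ 0) :
    LinearIndependent K (exchangeFamily B I N hcard) := by
  refine linearIndependent_of_eq_single_of_det_ne_zero N
    (fun j => exchangeFamily_of_notMem B I N hcard) ?_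
  rw [← Matrix.det_submatrix_equiv_self (N.orderIsoOfFin hcard).toEquiv, ← Matrix.det_transpose]
  convert hinv using 2
  congr 1
  exact Matrix.ext fun r c => congrFun (exchangeFamily_orderIsoOfFin B I N hcard c) _

variable (hinv : (Matrix.det fun r c : Fin I.card =>
  B ((N.orderIsoOfFin hcard r : Fin (n + m))) ((I.orderIsoOfFin rfl c : Fin n))) ≠ 0)

noncomputable def exchangeBasis : Module.Basis (Fin (n + m)) K (Fin (n + m) → K) :=
  have hli := linearIndependent_exchangeFamily hinv
  Module.Basis.mk hli (hli.span_eq_top_of_card_eq_finrank' (by simp)).ge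

theorem coe_exchangeBasis : ⇑(exchangeBasis B I N hcard hinv) = exchangeFamily B I N hcard := by
  rw [exchangeBasis]
  exact Module.Basis.coe_mk _ _

theorem single_mem_span_exchangeBasis
    (hII : ∀ i ∈ I, ∀ j ∈ I, B (Fin.castLE (Nat.le_add_right n m) i) j = 0)
    (hdisj : ∀ i ∈ I, Fin.castLE (Nat.le_add_right n m) i ∉ N)
    {j : Fin (n + m)} (hj : j ∉ I.image (Fin.castLE (Nat.le_add_right n m))) :
    Pi.single j 1 ∈ Submodule.span K (exchangeBasis B I N hcard hinv ''
      {u | u ∉ I.image (Fin.castLE (Nat.le_add_right n m))}) := by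
  rw [Module.Basis.mem_span_image]
  intro u hu
  by_contra hmem
  obtain ⟨i, hi, rfl⟩ := Finset.mem_image.1 (not_not.1 hmem)
  have hcoord (k : Fin (n + m)) :
      exchangeBasis B I N hcard hinv k (Fin.castLE (Nat.le_add_right n m) i) =
        (Pi.single k 1 : Fin (n + m) → K) (Fin.castLE (Nat.le_add_right n m) i) := by
    rw [coe_exchangeBasis]
    by_cases hk : k ∈ N
    · simp [exchangeFamily, hk, hII i hi, ne_of_mem_of_not_mem hk (hdisj i hi)]
    · rw [exchangeFamily_of_notMem B I N hcard hk]
  refine Finsupp.mem_support_iff.1 hu ?_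
  rw [Module.Basis.repr_apply_eq_apply _ hcoord, Pi.single_apply,
    if_neg (ne_of_mem_of_not_mem (Finset.mem_image_of_mem _ hi) hj)]

theorem prod_sort_map_ι_eq_exchangeBasis :
    ((I.sort (· ≤ ·)).map fun i => ExteriorAlgebra.ι K fun r => B r i).prod =
      (exchangeBasis B I N hcard hinv).ExteriorAlgebra N := by
  rw [ExteriorAlgebra.list_prod_map_sort_eq_ιMulti (fun i r => B r i) _ rfl,
    ExteriorAlgebra.basis_apply_ofCard _ hcard]
  congr 1
  funext k
  rw [Function.comp_apply, Function.comp_apply, coe_exchangeBasis]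
  exact (exchangeFamily_orderIsoOfFin B I N hcard k).symm

theorem prod_sort_map_ι_single_eq_exchangeBasis {A : Finset (Fin (n + m))} (hA : Disjoint A N) :
    ((A.sort (· ≤ ·)).map fun a => ExteriorAlgebra.ι K (Pi.single a 1)).prod =
      (exchangeBasis B I N hcard hinv).ExteriorAlgebra A := by
  rw [ExteriorAlgebra.basis_eq_prod_sort]
  congr 1
  refine List.map_congr_left fun a ha => ?_
  rw [coe_exchangeBasis, exchangeFamily_of_notMem B I N hcard
    (Finset.disjoint_left.1 hA ((Finset.mem_sort _).1 ha))]

end Exchange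

theorem card_compl_image_castLE_union {n m : ℕ} {I : Finset (Fin n)} {N : Finset (Fin (n + m))}
    (hcard : N.card = I.card) (hdisj : ∀ i ∈ I, Fin.castLE (Nat.le_add_right n m) i ∉ N) :
    (I.image (Fin.castLE (Nat.le_add_right n m)) ∪ N)ᶜ.card = n + m - 2 * I.card := by
  have hdisj' : Disjoint (I.image (Fin.castLE (Nat.le_add_right n m))) N :=
    Finset.disjoint_left.2 fun _ hx => by
      obtain ⟨i, hi, rfl⟩ := Finset.mem_image.1 hx
      exact hdisj i hi
  rw [Finset.card_compl, Fintype.card_fin, Finset.card_union_of_disjoint hdisj',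
    Finset.card_image_of_injective _ (Fin.castLE_injective _), hcard, two_mul]

theorem stmt14_general (n m : ℕ) (B : Matrix (Fin (n + m)) (Fin n) ℚ)
    (I : Finset (Fin n))
    (hII : ∀ i ∈ I, ∀ j ∈ I, B (Fin.castLE (Nat.le_add_right n m) i) j = 0)
    (N : Finset (Fin (n + m))) (hcard : N.card = I.card)
    (hdisj : ∀ i ∈ I, Fin.castLE (Nat.le_add_right n m) i ∉ N)
    (hinv : (Matrix.det fun r c : Fin I.card =>
      B ((N.orderIsoOfFin hcard r : Fin (n + m)))
        ((I.orderIsoOfFin rfl c : Fin n))) ≠ 0) :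
    let e : Fin (n + m) → ExteriorAlgebra ℚ (Fin (n + m) → ℚ) :=
      fun r => ExteriorAlgebra.ι ℚ (Pi.single r 1)
    let α : Fin n → ExteriorAlgebra ℚ (Fin (n + m) → ℚ) :=
      fun i => ExteriorAlgebra.ι ℚ (fun r => B r i)
    let ω : ExteriorAlgebra ℚ (Fin (n + m) → ℚ) := ((I.sort (· ≤ ·)).map α).prod
    let Iemb : Finset (Fin (n + m)) := I.image (Fin.castLE (Nat.le_add_right n m))
    let GI : Submodule ℚ (ExteriorAlgebra ℚ (Fin (n + m) → ℚ)) :=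
      Submodule.span ℚ {z | ∃ y ∈ Algebra.adjoin ℚ (e '' {j | j ∉ Iemb}), z = y * ω}
    let θ : Finset (Fin (n + m)) → ExteriorAlgebra ℚ (Fin (n + m) → ℚ) :=
      fun A => ((A.sort (· ≤ ·)).map e).prod * ω
    (LinearIndependent ℚ
      fun A : {A : Finset (Fin (n + m)) // A ⊆ (Iemb ∪ N)ᶜ} => θ A.1) ∧
    (Submodule.span ℚ
      (Set.range fun A : {A : Finset (Fin (n + m)) // A ⊆ (Iemb ∪ N)ᶜ} => θ A.1) = GI) ∧
    Module.finrank ℚ GI = 2 ^ (n + m - 2 * I.card) := by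
  intro e α ω Iemb GI θ
  let b := exchangeBasis B I N hcard hinv
  have hω : ω = b.ExteriorAlgebra N := prod_sort_map_ι_eq_exchangeBasis B I N hcard hinv
  have hθ : (fun A : {A : Finset (Fin (n + m)) // A ⊆ (Iemb ∪ N)ᶜ} => θ A.1) =
      fun A => b.ExteriorAlgebra A.1 * b.ExteriorAlgebra N := funext fun A => by
    rw [← hω, ← prod_sort_map_ι_single_eq_exchangeBasis B I N hcard hinv
      ((Finset.subset_compl_iff_disjoint_right.1 A.2).mono_right Finset.subset_union_right)]
  have hGI : ExteriorAlgebra.spanBasisMulBasis b Iemb N = GI := by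
    refine le_antisymm (Submodule.span_le.2 ?_) (Submodule.span_le.2 ?_)
    · rintro _ ⟨A, rfl⟩
      refine Submodule.subset_span
        ⟨_, Subalgebra.list_prod_mem _ fun x hx => ?_, (congrFun hθ A).symm⟩
      obtain ⟨a, ha, rfl⟩ := List.mem_map.1 hx
      exact Algebra.subset_adjoin ⟨a, fun haI =>
        Finset.mem_compl.1 (A.2 ((Finset.mem_sort _).1 ha)) (Finset.mem_union_left _ haI), rfl⟩
    · rintro _ ⟨y, hy, rfl⟩
      rw [hω]
      refine ExteriorAlgebra.mul_basis_mem_spanBasisMulBasis_of_mem_adjoin ?_ hy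
      rintro _ ⟨j, hj, rfl⟩
      exact ⟨_, single_mem_span_exchangeBasis B I N hcard hinv hII hdisj hj, rfl⟩
  refine ⟨hθ ▸ ExteriorAlgebra.linearIndependent_basis_mul_basis_of_subset_compl b Iemb N,
    hθ ▸ hGI, ?_⟩
  rw [← hGI, ExteriorAlgebra.finrank_spanBasisMulBasis, card_compl_image_castLE_union hcard hdisj]

/-- With `B̃` a full-column-rank `(n+m)×n` rational matrix,
`I ⊆ [n]` with `B̃_{I,I} = 0` and `N(I)` a set of `|I|` rows disjoint from `I`
with `B̃_{N(I),I}` invertible, set `α_i = Σ_r B̃_{ri} e_r` and let `G^I` be the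
submodule of the exterior algebra generated by `ω = ⋀_{i∈I} α_i` over the
subalgebra generated by `{e_j : j ∉ I}`. Then the elements
`θ(A,I) = (⋀_{a∈A} e_a) ∧ ω` for `A ⊆ [n+m] \ (I ∪ N(I))` form a basis of
`G^I`; in particular `dim G^I = 2^{n+m-2|I|}`. -/
theorem stmt14 (n m : ℕ) (B : Matrix (Fin (n + m)) (Fin n) ℚ)
    (hrank : LinearIndependent ℚ fun j : Fin n => fun r : Fin (n + m) => B r j)
    (I : Finset (Fin n))
    (hII : ∀ i ∈ I, ∀ j ∈ I, B (Fin.castLE (Nat.le_add_right n m) i) j = 0)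
    (N : Finset (Fin (n + m))) (hcard : N.card = I.card)
    (hdisj : ∀ i ∈ I, Fin.castLE (Nat.le_add_right n m) i ∉ N)
    (hinv : (Matrix.det fun r c : Fin I.card =>
      B ((N.orderIsoOfFin hcard r : Fin (n + m)))
        ((I.orderIsoOfFin rfl c : Fin n))) ≠ 0) :
    let e : Fin (n + m) → ExteriorAlgebra ℚ (Fin (n + m) → ℚ) :=
      fun r => ExteriorAlgebra.ι ℚ (Pi.single r 1)
    let α : Fin n → ExteriorAlgebra ℚ (Fin (n + m) → ℚ) :=
      fun i => ExteriorAlgebra.ι ℚ (fun r => B r i)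
    let ω : ExteriorAlgebra ℚ (Fin (n + m) → ℚ) := ((I.sort (· ≤ ·)).map α).prod
    let Iemb : Finset (Fin (n + m)) := I.image (Fin.castLE (Nat.le_add_right n m))
    let GI : Submodule ℚ (ExteriorAlgebra ℚ (Fin (n + m) → ℚ)) :=
      Submodule.span ℚ {z | ∃ y ∈ Algebra.adjoin ℚ (e '' {j | j ∉ Iemb}), z = y * ω}
    let θ : Finset (Fin (n + m)) → ExteriorAlgebra ℚ (Fin (n + m) → ℚ) :=
      fun A => ((A.sort (· ≤ ·)).map e).prod * ω
    (LinearIndependent ℚ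
      fun A : {A : Finset (Fin (n + m)) // A ⊆ (Iemb ∪ N)ᶜ} => θ A.1) ∧
    (Submodule.span ℚ
      (Set.range fun A : {A : Finset (Fin (n + m)) // A ⊆ (Iemb ∪ N)ᶜ} => θ A.1) = GI) ∧
    Module.finrank ℚ GI = 2 ^ (n + m - 2 * I.card) :=
  stmt14_general n m B I hII N hcard hdisj hinv
end
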